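/- Let R be a unital ring with involution and a ∈ R. Then a is core invertible if and only if there exists a Hermitian element p such that pa = 0 and u = a + p is invertible. In that case, a° = u^{-1} a u^{-1} = (u*u)^{-1} a*. -/

import Mathlib

/-!
Writing `a°` for the core inverse, `a a°` is a Hermitian idempotent with `a a° a = a`, so
`p = 1 - a a°` is Hermitian, kills `a` from the left, and `a + p` has the explicit inverse
`a° + 1 - a° a`. Conversely, if `u = a + p` with `p* = p` and `p a = 0`, then `u a = a²` and
`a* u = a* a`; from these `v = u⁻¹` satisfies `a v a = a` with `a v` Hermitian, and `v a v` obeys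
the defining equations of the core inverse. Since `u* a v = a*`, this element is also
`(u* u)⁻¹ a*`, and the formulas follow from uniqueness of the core inverse.
-/

/-- `x` is the core inverse of `a`. -/
def IsCoreInverse {R : Type*} [Ring R] [StarRing R] (a x : R) : Prop :=
  a * x * a = a ∧
    {y : R | ∃ r : R, y = x * r} = {y : R | ∃ r : R, y = a * r} ∧
    {y : R | ∃ r : R, y = r * x} = {y : R | ∃ r : R, y = r * star a}

section Monoid

variable {M : Type*} [Monoid M] {a b : M}

theorem setOf_exists_mul_right_eq_iff :
    {y : M | ∃ r, y = a * r} = {y | ∃ r, y = b * r} ↔ (∃ r, a = b * r) ∧ ∃ r, b = a * r := by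
  constructor
  · intro h
    exact ⟨(Set.ext_iff.mp h a).mp ⟨1, (mul_one a).symm⟩,
      (Set.ext_iff.mp h b).mpr ⟨1, (mul_one b).symm⟩⟩
  · rintro ⟨⟨r, hr⟩, ⟨s, hs⟩⟩
    ext y
    constructor <;> rintro ⟨t, rfl⟩
    exacts [⟨r * t, by rw [hr, mul_assoc]⟩, ⟨s * t, by rw [hs, mul_assoc]⟩]

theorem setOf_exists_mul_left_eq_iff :
    {y : M | ∃ r, y = r * a} = {y | ∃ r, y = r * b} ↔ (∃ r, a = r * b) ∧ ∃ r, b = r * a := by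
  constructor
  · intro h
    exact ⟨(Set.ext_iff.mp h a).mp ⟨1, (one_mul a).symm⟩,
      (Set.ext_iff.mp h b).mpr ⟨1, (one_mul b).symm⟩⟩
  · rintro ⟨⟨r, hr⟩, ⟨s, hs⟩⟩
    ext y
    constructor <;> rintro ⟨t, rfl⟩
    exacts [⟨t * r, by rw [hr, mul_assoc]⟩, ⟨t * s, by rw [hs, mul_assoc]⟩]

theorem mul_mul_eq_of_mul_mul_self_eq {x : M} (haxx : a * x * x = x) (hxaa : x * a * a = a) :
    x * a * x = x :=
  calc x * a * x = x * a * (a * x * x) := by rw [haxx]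
    _ = x * a * a * x * x := by simp only [mul_assoc]
    _ = x := by rw [hxaa, haxx]

end Monoid

section StarRing

variable {R : Type*} [Ring R] [StarRing R] {a x y : R}

theorem isCoreInverse_iff :
    IsCoreInverse a x ↔
      a * x * a = a ∧ star (a * x) = a * x ∧ a * x * x = x ∧ x * a * a = a := by
  simp only [IsCoreInverse, setOf_exists_mul_right_eq_iff, setOf_exists_mul_left_eq_iff]
  constructor
  · rintro ⟨haxa, ⟨⟨s, hs⟩, t, ht⟩, ⟨r, hr⟩, -⟩
    have hx_star : x * star (a * x) = x :=
      calc x * star (a * x) = r * star (a * x * a) := by rw [star_mul (a * x) a, ← mul_assoc, ← hr]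
        _ = x := by rw [haxa, ← hr]
    have hherm : star (a * x) = a * x := by
      have h : a * x * star (a * x) = a * x := by rw [mul_assoc, hx_star]
      calc star (a * x) = star (a * x * star (a * x)) := by rw [h]
        _ = a * x * star (a * x) := by rw [star_mul, star_star]
        _ = a * x := h
    have hxax : x * (a * x) = x := by rwa [hherm] at hx_star
    refine ⟨haxa, hherm, ?_, ?_⟩
    · calc a * x * x = a * x * (a * s) := by rw [← hs]
        _ = a * x * a * s := by simp only [mul_assoc]
        _ = x := by rw [haxa, ← hs]
    · calc x * a * a = x * a * (x * t) := by rw [← ht]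
        _ = x * (a * x) * t := by simp only [mul_assoc]
        _ = a := by rw [hxax, ← ht]
  · rintro ⟨haxa, hherm, haxx, hxaa⟩
    refine ⟨haxa, ⟨⟨x * x, by rw [← mul_assoc, haxx]⟩, a * a, by rw [← mul_assoc, hxaa]⟩,
      ⟨x * star x, ?_⟩, star a * a, ?_⟩
    · calc x = x * (a * x) := by rw [← mul_assoc, mul_mul_eq_of_mul_mul_self_eq haxx hxaa]
        _ = x * star x * star a := by rw [← hherm, star_mul, mul_assoc]
    · calc star a = star (a * x * a) := by rw [haxa]
        _ = star a * a * x := by rw [star_mul, hherm, mul_assoc]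

namespace IsCoreInverse

/-- Both `a x` and `a y` are Hermitian idempotents absorbing each other, hence equal; then
`x - y = (x - y) a (a x x)` vanishes because `(x - y) a a = a - a`. -/
theorem unique (hx : IsCoreInverse a x) (hy : IsCoreInverse a y) : x = y := by
  obtain ⟨hxaxa, hxherm, hxaxx, hxxaa⟩ := isCoreInverse_iff.mp hx
  obtain ⟨hyaya, hyherm, hyayy, hyyaa⟩ := isCoreInverse_iff.mp hy
  have hax : a * x = a * y :=
    calc a * x = star (a * y * (a * x)) := by rw [← mul_assoc (a * y) a x, hyaya, hxherm]
      _ = a * x * (a * y) := by rw [star_mul, hxherm, hyherm]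
      _ = a * y := by rw [← mul_assoc, hxaxa]
  have hsub : (x - y) * a * a = 0 := by rw [sub_mul, sub_mul, hxxaa, hyyaa, sub_self]
  rw [← sub_eq_zero]
  calc x - y = x * (a * x) - y * (a * y) := by
        rw [← mul_assoc, ← mul_assoc, mul_mul_eq_of_mul_mul_self_eq hxaxx hxxaa,
          mul_mul_eq_of_mul_mul_self_eq hyayy hyyaa]
    _ = (x - y) * (a * (a * x * x)) := by rw [← hax, sub_mul, hxaxx]
    _ = (x - y) * a * a * (x * x) := by simp only [mul_assoc]
    _ = 0 := by rw [hsub, zero_mul]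

theorem isUnit_add_one_sub_mul (h : IsCoreInverse a x) : IsUnit (a + (1 - a * x)) := by
  obtain ⟨haxa, -, haxx, hxaa⟩ := isCoreInverse_iff.mp h
  have hxax := mul_mul_eq_of_mul_mul_self_eq haxx hxaa
  refine ⟨⟨a + (1 - a * x), x + (1 - x * a), ?_, ?_⟩, rfl⟩
  · calc (a + (1 - a * x)) * (x + (1 - x * a))
        = 1 + (a - a * x * a) - (a * x * x - x) * (1 - a) := by noncomm_ring
      _ = 1 := by rw [haxa, haxx, sub_self, sub_self, zero_mul, add_zero, sub_zero]
  · calc (x + (1 - x * a)) * (a + (1 - a * x))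
        = 1 + (x - x * a * x) - (x * a * a - a) * (1 - x) := by noncomm_ring
      _ = 1 := by rw [hxax, hxaa, sub_self, sub_self, zero_mul, add_zero, sub_zero]

end IsCoreInverse

section AddHermitian

variable {p : R} {u : Rˣ}

theorem star_mul_self_mul_inv_of_add_eq (hp : star p = p) (hpa : p * a = 0)
    (hu : (u : R) = a + p) : star a * a * ↑u⁻¹ = star a := by
  have hap : star a * p = 0 := by rw [← hp, ← star_mul, hpa, star_zero]
  calc star a * a * ↑u⁻¹ = star a * ↑u * ↑u⁻¹ := by rw [hu, mul_add, hap, add_zero]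
    _ = star a := by rw [mul_assoc, u.mul_inv, mul_one]

theorem star_mul_self_mul_inv_mul_mul_inv_of_add_eq (hp : star p = p) (hpa : p * a = 0)
    (hu : (u : R) = a + p) :
    star (u : R) * u * (↑u⁻¹ * a * ↑u⁻¹) = star a :=
  calc star (u : R) * u * (↑u⁻¹ * a * ↑u⁻¹) = star (u : R) * (u * ↑u⁻¹) * a * ↑u⁻¹ := by
        simp only [mul_assoc]
    _ = (star a + p) * a * ↑u⁻¹ := by rw [u.mul_inv, mul_one, hu, star_add, hp]
    _ = star a := by
        rw [add_mul, hpa, add_zero, star_mul_self_mul_inv_of_add_eq hp hpa hu]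

theorem isCoreInverse_inv_mul_mul_inv_of_add_eq (hp : star p = p) (hpa : p * a = 0)
    (hu : (u : R) = a + p) : IsCoreInverse a (↑u⁻¹ * a * ↑u⁻¹) := by
  set v : R := ↑u⁻¹
  have hvu : v * u = 1 := u.inv_mul
  have haav : star a * a * v = star a := star_mul_self_mul_inv_of_add_eq hp hpa hu
  have hvaa : star v * (star a * a) = a := by
    simpa only [star_mul, star_star, mul_assoc] using congrArg star haav
  have hava : a * v * a = a :=
    calc a * v * a = star v * (star a * a) * v * a := by rw [hvaa]
      _ = star v * (star a * a * v) * a := by simp only [mul_assoc]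
      _ = a := by rw [haav, mul_assoc, hvaa]
  have hherm : star (a * v) = a * v :=
    calc star (a * v) = star v * (star a * a * v) := by rw [haav, star_mul]
      _ = star v * (star a * a) * v := by simp only [mul_assoc]
      _ = a * v := by rw [hvaa]
  have hpv : p * v = 1 - a * v := by
    rw [eq_sub_iff_add_eq, ← add_mul, add_comm, ← hu]
    exact u.mul_inv
  have hpx : p * (v * a * v) = 0 := by
    rw [← mul_assoc, ← mul_assoc, hpv, sub_mul, sub_mul, one_mul, hava, sub_self]
  have h1av : 1 - a * v = star v * p := by
    rw [← hp, ← star_mul, hpv, star_sub, star_one, hherm]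
  -- `(1 - a v) x = v* (p x) = 0` puts `x = v a v` in the right ideal `a R`.
  have hx : a * v * (v * a * v) = v * a * v := by
    have h : (1 - a * v) * (v * a * v) = 0 := by rw [h1av, mul_assoc, hpx, mul_zero]
    rwa [sub_mul, one_mul, sub_eq_zero, eq_comm] at h
  have hax : a * (v * a * v) = a * v := by rw [← mul_assoc, ← mul_assoc, hava]
  have hua : (u : R) * a = a * a := by rw [hu, add_mul, hpa, add_zero]
  refine isCoreInverse_iff.mpr ⟨by rw [hax, hava], by rw [hax, hherm], by rw [hax, hx], ?_⟩
  calc v * a * v * a * a = v * (a * v * a) * a := by simp only [mul_assoc]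
    _ = v * (u * a) := by rw [hava, mul_assoc, hua]
    _ = a := by rw [← mul_assoc, hvu, one_mul]

end AddHermitian

end StarRing

theorem stmt_12 {R : Type*} [Ring R] [StarRing R] (a : R) :
    ((∃ x : R, IsCoreInverse a x) ↔
      (∃ p : R, star p = p ∧ p * a = 0 ∧ IsUnit (a + p))) ∧
    (∀ (x p : R) (u : Rˣ), IsCoreInverse a x → star p = p → p * a = 0 →
      (u : R) = a + p →
      x = (↑u⁻¹ : R) * a * (↑u⁻¹ : R) ∧
      x = Ring.inverse (star ((u : R)) * (u : R)) * star a) := by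
  refine ⟨⟨fun ⟨x, hx⟩ => ?_, fun ⟨p, hp, hpa, u, hu⟩ =>
    ⟨_, isCoreInverse_inv_mul_mul_inv_of_add_eq hp hpa hu⟩⟩, ?_⟩
  · obtain ⟨haxa, hherm, -, -⟩ := isCoreInverse_iff.mp hx
    refine ⟨1 - a * x, ?_, ?_, hx.isUnit_add_one_sub_mul⟩
    · rw [star_sub, star_one, hherm]
    · rw [sub_mul, one_mul, haxa, sub_self]
  · intro x p u hx hp hpa hu
    have hx_eq := hx.unique (isCoreInverse_inv_mul_mul_inv_of_add_eq hp hpa hu)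
    refine ⟨hx_eq, ?_⟩
    rw [hx_eq, ← star_mul_self_mul_inv_mul_mul_inv_of_add_eq hp hpa hu,
      Ring.inverse_mul_cancel_left _ _ (u.isUnit.star.mul u.isUnit)]
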